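/- Key kernel estimate behind Proposition 4.2: let T > 0, α ∈ (0, 1/2) and C₀ ≥ 0. There exists a constant C₁ = C₁(T, α, C₀) > 0 such that for every N ∈ ℕ with N ≥ 1, setting h = T/N, and for every measurable function g : [0,T] × [0,T] → [0, ∞) satisfying (i) g(t, s) ≤ C₀ (|t − s| + h) for all t, s ∈ [0, T], and (ii) g(t, s) = 0 whenever there exists n ∈ ℕ with both t and s in [nh, (n+1)h), one has ∫_0^T ∫_0^T g(t, s) |t − s|^{−1−2α} dt ds ≤ C₁. -/

import Mathlib

/-!
Write `β = 2α` and split `g(t,s)|t-s|^{-1-β} ≤ C₀|t-s|^{-β} + C₀h|t-s|^{-1-β}`. The first term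
is integrable on `[0,T]²` because `β < 1`. For the second, fix `t` in a grid cell `(a, a+h)`:
since `g` vanishes on the cell, only `s` outside it contributes, and that tail integral is at most
`((t-a)^{-β} + (a+h-t)^{-β})/β`, which integrates over the cell to `O(h^{1-β})`. With the factor
`h`, each of the `N` cells contributes `O(h^{2-β})`, in total `O(T h^{1-β}) ≤ O(T^{2-β})`.
-/

open MeasureTheory Set
open scoped ENNReal

theorem lintegral_biUnion_finset_le {α ι : Type*} [MeasurableSpace α] {μ : Measure α}
    (s : Finset ι) (t : ι → Set α) (f : α → ℝ≥0∞) :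
    ∫⁻ x in ⋃ i ∈ s, t i, f x ∂μ ≤ ∑ i ∈ s, ∫⁻ x in t i, f x ∂μ := by
  classical
  induction s using Finset.induction_on with
  | empty => simp
  | insert i s hi ih =>
    rw [Finset.set_biUnion_insert, Finset.sum_insert hi]
    exact (lintegral_union_le _ _ _).trans (add_le_add_right ih _)

theorem setLIntegral_preimage_const_sub (f : ℝ → ℝ≥0∞) (t : ℝ) (A : Set ℝ) :
    ∫⁻ s in (t - ·) ⁻¹' A, f (t - s) = ∫⁻ u in A, f u :=
  (Measure.measurePreserving_sub_left volume t).setLIntegral_comp_preimage_emb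
    (Homeomorph.subLeft t).measurableEmbedding f A

theorem setLIntegral_preimage_sub_const (f : ℝ → ℝ≥0∞) (t : ℝ) (A : Set ℝ) :
    ∫⁻ s in (· - t) ⁻¹' A, f (s - t) = ∫⁻ u in A, f u :=
  (measurePreserving_sub_right volume t).setLIntegral_comp_preimage_emb
    (Homeomorph.subRight t).measurableEmbedding f A

theorem lintegral_Icc_abs_rpow {e L : ℝ} (he : -1 < e) (hL : 0 ≤ L) :
    ∫⁻ u in Icc 0 L, ENNReal.ofReal (|u| ^ e) = ENNReal.ofReal (L ^ (e + 1) / (e + 1)) := by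
  have hpos : EqOn (fun u : ℝ => |u| ^ e) (· ^ e) (Ioc 0 L) := fun u hu => by
    simp only [abs_of_pos hu.1]
  have hint : IntegrableOn (fun u : ℝ => |u| ^ e) (Ioc 0 L) :=
    (intervalIntegral.intervalIntegrable_rpow' he).1.congr_fun hpos.symm measurableSet_Ioc
  rw [← setLIntegral_congr Ioc_ae_eq_Icc, ← ofReal_integral_eq_lintegral_ofReal hint
    (ae_of_all _ fun u => by positivity), setIntegral_congr_fun measurableSet_Ioc hpos,
    ← intervalIntegral.integral_of_le hL, integral_rpow (.inl he),
    Real.zero_rpow (by linarith), sub_zero]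

theorem lintegral_Ici_abs_rpow {β d : ℝ} (hβ : 0 < β) (hd : 0 < d) :
    ∫⁻ u in Ici d, ENNReal.ofReal (|u| ^ (-1 - β)) = ENNReal.ofReal (d ^ (-β) / β) := by
  have hpos : EqOn (fun u : ℝ => |u| ^ (-1 - β)) (· ^ (-1 - β)) (Ioi d) := fun u hu => by
    simp only [abs_of_pos (hd.trans hu)]
  have hint : IntegrableOn (fun u : ℝ => |u| ^ (-1 - β)) (Ioi d) :=
    (integrableOn_Ioi_rpow_of_lt (by linarith) hd).congr_fun hpos.symm measurableSet_Ioi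
  rw [← setLIntegral_congr Ioi_ae_eq_Ici, ← ofReal_integral_eq_lintegral_ofReal hint
    (ae_of_all _ fun u => by positivity), setIntegral_congr_fun measurableSet_Ioi hpos,
    integral_Ioi_rpow_of_lt (by linarith) hd]
  congr 1
  rw [show -1 - β + 1 = -β by ring, neg_div_neg_eq]

theorem lintegral_Icc_abs_sub_rpow_le {e a b t : ℝ} (he : -1 < e) (ht : t ∈ Icc a b) :
    ∫⁻ s in Icc a b, ENNReal.ofReal (|t - s| ^ e) ≤
      ENNReal.ofReal (2 * ((b - a) ^ (e + 1) / (e + 1))) := by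
  set L := b - a
  have hsplit : Icc a b ⊆ (t - ·) ⁻¹' Icc 0 L ∪ (· - t) ⁻¹' Icc 0 L := by
    intro s hs
    rcases le_total s t with hst | hts
    · exact .inl ⟨by simpa using hst, by simp only; linarith [hs.1, ht.2]⟩
    · exact .inr ⟨by simpa using hts, by simp only; linarith [hs.2, ht.1]⟩
  have hL : 0 ≤ L := by linarith [ht.1, ht.2]
  have hk : ∫⁻ u in Icc 0 L, ENNReal.ofReal (|u| ^ e) =
      ENNReal.ofReal (L ^ (e + 1) / (e + 1)) := lintegral_Icc_abs_rpow he hL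
  have hq : 0 ≤ L ^ (e + 1) / (e + 1) := div_nonneg (by positivity) (by linarith)
  calc ∫⁻ s in Icc a b, ENNReal.ofReal (|t - s| ^ e)
      ≤ (∫⁻ s in (t - ·) ⁻¹' Icc 0 L, ENNReal.ofReal (|t - s| ^ e)) +
          ∫⁻ s in (· - t) ⁻¹' Icc 0 L, ENNReal.ofReal (|s - t| ^ e) := by
        simp_rw [abs_sub_comm _ t]
        exact (lintegral_mono_set hsplit).trans (lintegral_union_le _ _ _)
    _ = ENNReal.ofReal (2 * (L ^ (e + 1) / (e + 1))) := by
        rw [setLIntegral_preimage_const_sub (fun u => ENNReal.ofReal (|u| ^ e)),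
          setLIntegral_preimage_sub_const (fun u => ENNReal.ofReal (|u| ^ e)), hk,
          ← ENNReal.ofReal_add hq hq, two_mul]

theorem lintegral_Ioo_abs_sub_rpow_add_le {e a b : ℝ} (he : -1 < e) (hab : a ≤ b) :
    ∫⁻ t in Ioo a b, ENNReal.ofReal (|t - a| ^ e + |b - t| ^ e) ≤
      ENNReal.ofReal (2 * ((b - a) ^ (e + 1) / (e + 1))) := by
  set L := b - a
  have hL : 0 ≤ L := by linarith
  have hk : ∫⁻ u in Icc 0 L, ENNReal.ofReal (|u| ^ e) =
      ENNReal.ofReal (L ^ (e + 1) / (e + 1)) := lintegral_Icc_abs_rpow he hL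
  have hq : 0 ≤ L ^ (e + 1) / (e + 1) := div_nonneg (by positivity) (by linarith)
  have hleft : Ioo a b ⊆ (· - a) ⁻¹' Icc 0 L := fun t ht => by
    constructor <;> simp only <;> linarith [ht.1, ht.2]
  have hright : Ioo a b ⊆ (b - ·) ⁻¹' Icc 0 L := fun t ht => by
    constructor <;> simp only <;> linarith [ht.1, ht.2]
  calc ∫⁻ t in Ioo a b, ENNReal.ofReal (|t - a| ^ e + |b - t| ^ e)
      = (∫⁻ t in Ioo a b, ENNReal.ofReal (|t - a| ^ e)) +
          ∫⁻ t in Ioo a b, ENNReal.ofReal (|b - t| ^ e) := by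
        simp_rw [ENNReal.ofReal_add (Real.rpow_nonneg (abs_nonneg _) _)
          (Real.rpow_nonneg (abs_nonneg _) _)]
        exact lintegral_add_left (by fun_prop) _
    _ ≤ (∫⁻ t in (· - a) ⁻¹' Icc 0 L, ENNReal.ofReal (|t - a| ^ e)) +
          ∫⁻ t in (b - ·) ⁻¹' Icc 0 L, ENNReal.ofReal (|b - t| ^ e) :=
        add_le_add (lintegral_mono_set hleft) (lintegral_mono_set hright)
    _ = ENNReal.ofReal (2 * (L ^ (e + 1) / (e + 1))) := by
        rw [setLIntegral_preimage_const_sub (fun u => ENNReal.ofReal (|u| ^ e)),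
          setLIntegral_preimage_sub_const (fun u => ENNReal.ofReal (|u| ^ e)), hk,
          ← ENNReal.ofReal_add hq hq, two_mul]

theorem lintegral_compl_Ico_abs_sub_rpow_le {β a b t : ℝ} (hβ : 0 < β) (ht : t ∈ Ioo a b) :
    ∫⁻ s in (Ico a b)ᶜ, ENNReal.ofReal (|t - s| ^ (-1 - β)) ≤
      ENNReal.ofReal ((|t - a| ^ (-β) + |b - t| ^ (-β)) / β) := by
  have hsplit : (Ico a b)ᶜ ⊆ (t - ·) ⁻¹' Ici (t - a) ∪ (· - t) ⁻¹' Ici (b - t) := by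
    intro s hs
    rcases not_and_or.mp hs with has | hbs
    · exact .inl (by simp only [mem_preimage, mem_Ici]; linarith [not_le.mp has])
    · exact .inr (by simp only [mem_preimage, mem_Ici]; linarith [not_lt.mp hbs])
  calc ∫⁻ s in (Ico a b)ᶜ, ENNReal.ofReal (|t - s| ^ (-1 - β))
      ≤ (∫⁻ s in (t - ·) ⁻¹' Ici (t - a), ENNReal.ofReal (|t - s| ^ (-1 - β))) +
          ∫⁻ s in (· - t) ⁻¹' Ici (b - t), ENNReal.ofReal (|s - t| ^ (-1 - β)) := by
        simp_rw [abs_sub_comm _ t]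
        exact (lintegral_mono_set hsplit).trans (lintegral_union_le _ _ _)
    _ = ENNReal.ofReal ((|t - a| ^ (-β) + |b - t| ^ (-β)) / β) := by
        rw [setLIntegral_preimage_const_sub (fun u => ENNReal.ofReal (|u| ^ (-1 - β))),
          setLIntegral_preimage_sub_const (fun u => ENNReal.ofReal (|u| ^ (-1 - β))),
          lintegral_Ici_abs_rpow hβ (sub_pos.2 ht.1), lintegral_Ici_abs_rpow hβ (sub_pos.2 ht.2),
          abs_of_pos (sub_pos.2 ht.1), abs_of_pos (sub_pos.2 ht.2), add_div,
          ENNReal.ofReal_add (div_nonneg (Real.rpow_nonneg (sub_pos.2 ht.1).le _) hβ.le)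
            (div_nonneg (Real.rpow_nonneg (sub_pos.2 ht.2).le _) hβ.le)]

theorem lintegral_Icc_le_sum_Ico (f : ℝ → ℝ≥0∞) (h : ℝ) (N : ℕ) :
    ∫⁻ t in Icc 0 (N * h), f t ≤ ∑ n ∈ Finset.range N, ∫⁻ t in Ico (n * h) (n * h + h), f t := by
  rw [← setLIntegral_congr Ico_ae_eq_Icc]
  refine (lintegral_mono_set ?_).trans (lintegral_biUnion_finset_le _ _ _)
  simpa [add_one_mul] using Ico_subset_biUnion_Ico N (fun n => (n : ℝ) * h)

theorem mul_rpow_le_of_le_mul_add {x r C h β : ℝ} (hr : 0 < r) (hx : x ≤ C * (r + h)) :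
    x * r ^ (-1 - β) ≤ C * r ^ (-β) + C * h * r ^ (-1 - β) :=
  calc x * r ^ (-1 - β) ≤ C * (r + h) * r ^ (-1 - β) :=
        mul_le_mul_of_nonneg_right hx (by positivity)
    _ = C * (r ^ (1 : ℝ) * r ^ (-1 - β)) + C * h * r ^ (-1 - β) := by rw [Real.rpow_one]; ring
    _ = C * r ^ (-β) + C * h * r ^ (-1 - β) := by rw [← Real.rpow_add hr]; ring_nf

theorem lintegral_Icc_kernel_le_of_mem_Ioo {g : ℝ × ℝ → ℝ} {C₀ β T a h t : ℝ}
    (hC₀ : 0 ≤ C₀) (hh : 0 ≤ h) (hβ0 : 0 < β) (hβ1 : β < 1)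
    (hg_le : ∀ s ∈ Icc 0 T, g (t, s) ≤ C₀ * (|t - s| + h))
    (hg_cell : ∀ s ∈ Ico a (a + h), g (t, s) = 0)
    (ht : t ∈ Ioo a (a + h)) (htT : t ∈ Icc 0 T) :
    ∫⁻ s in Icc 0 T, ENNReal.ofReal (g (t, s) * |t - s| ^ (-1 - β)) ≤
      ENNReal.ofReal (C₀ * (2 * (T ^ (-β + 1) / (-β + 1))) +
        C₀ * h / β * (|t - a| ^ (-β) + |a + h - t| ^ (-β))) := by
  set far := (Ico a (a + h))ᶜ.indicator fun s => ENNReal.ofReal (|t - s| ^ (-1 - β))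
  have hfar_meas : Measurable far :=
    (by fun_prop : Measurable fun s : ℝ => ENNReal.ofReal (|t - s| ^ (-1 - β))).indicator
      measurableSet_Ico.compl
  have hpoint : ∀ s ∈ Icc 0 T, ENNReal.ofReal (g (t, s) * |t - s| ^ (-1 - β)) ≤
      ENNReal.ofReal C₀ * ENNReal.ofReal (|t - s| ^ (-β)) + ENNReal.ofReal (C₀ * h) * far s := by
    intro s hs
    by_cases hsc : s ∈ Ico a (a + h)
    · simp [hg_cell s hsc]
    have hr : 0 < |t - s| :=
      abs_pos.2 (sub_ne_zero.2 fun hts => hsc (hts ▸ Ioo_subset_Ico_self ht))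
    rw [show far s = _ from indicator_of_mem (mem_compl hsc) _, ← ENNReal.ofReal_mul hC₀,
      ← ENNReal.ofReal_mul (by positivity), ← ENNReal.ofReal_add (by positivity) (by positivity)]
    exact ENNReal.ofReal_le_ofReal (mul_rpow_le_of_le_mul_add hr (hg_le s hs))
  have hfar : ∫⁻ s in Icc 0 T, far s ≤
      ENNReal.ofReal ((|t - a| ^ (-β) + |a + h - t| ^ (-β)) / β) :=
    calc ∫⁻ s in Icc 0 T, far s ≤ ∫⁻ s, far s := setLIntegral_le_lintegral _ _
      _ = ∫⁻ s in (Ico a (a + h))ᶜ, ENNReal.ofReal (|t - s| ^ (-1 - β)) :=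
        lintegral_indicator measurableSet_Ico.compl _
      _ ≤ _ := lintegral_compl_Ico_abs_sub_rpow_le hβ0 ht
  have hnear := lintegral_Icc_abs_sub_rpow_le (by linarith : -1 < -β) htT
  rw [sub_zero] at hnear
  calc ∫⁻ s in Icc 0 T, ENNReal.ofReal (g (t, s) * |t - s| ^ (-1 - β))
      ≤ ∫⁻ s in Icc 0 T, (ENNReal.ofReal C₀ * ENNReal.ofReal (|t - s| ^ (-β)) +
          ENNReal.ofReal (C₀ * h) * far s) :=
        setLIntegral_mono (by fun_prop) hpoint
    _ = ENNReal.ofReal C₀ * (∫⁻ s in Icc 0 T, ENNReal.ofReal (|t - s| ^ (-β))) +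
          ENNReal.ofReal (C₀ * h) * ∫⁻ s in Icc 0 T, far s := by
        rw [lintegral_add_left (by fun_prop), lintegral_const_mul _ (by fun_prop),
          lintegral_const_mul _ hfar_meas]
    _ ≤ ENNReal.ofReal C₀ * ENNReal.ofReal (2 * (T ^ (-β + 1) / (-β + 1))) +
          ENNReal.ofReal (C₀ * h) *
            ENNReal.ofReal ((|t - a| ^ (-β) + |a + h - t| ^ (-β)) / β) := by
        gcongr
    _ = _ := by
        have hT : 0 ≤ T := htT.1.trans htT.2
        have hnear_nonneg : 0 ≤ 2 * (T ^ (-β + 1) / (-β + 1)) :=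
          mul_nonneg zero_le_two (div_nonneg (by positivity) (by linarith))
        rw [← ENNReal.ofReal_mul hC₀, ← ENNReal.ofReal_mul (by positivity),
          ← ENNReal.ofReal_add (by positivity) (by positivity)]
        congr 1
        ring

noncomputable def kernelBound (C₀ β T h : ℝ) : ℝ :=
  2 * C₀ * (T ^ (1 - β) + h ^ (1 - β) / β) / (1 - β)

theorem kernelBound_nonneg {C₀ β T h : ℝ} (hC₀ : 0 ≤ C₀) (hβ0 : 0 < β) (hβ1 : β < 1)
    (hT : 0 ≤ T) (hh : 0 ≤ h) : 0 ≤ kernelBound C₀ β T h :=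
  div_nonneg (by positivity) (by linarith)

theorem kernelBound_mono {C₀ β T h h' : ℝ} (hC₀ : 0 ≤ C₀) (hβ0 : 0 < β) (hβ1 : β < 1)
    (hh : 0 ≤ h) (hhh' : h ≤ h') : kernelBound C₀ β T h ≤ kernelBound C₀ β T h' := by
  unfold kernelBound
  gcongr

theorem lintegral_Ico_lintegral_Icc_kernel_le {g : ℝ × ℝ → ℝ} {C₀ β T a h : ℝ}
    (hC₀ : 0 ≤ C₀) (hh : 0 ≤ h) (hβ0 : 0 < β) (hβ1 : β < 1) (ha : 0 ≤ a) (haT : a + h ≤ T)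
    (hg_le : ∀ t ∈ Icc 0 T, ∀ s ∈ Icc 0 T, g (t, s) ≤ C₀ * (|t - s| + h))
    (hg_cell : ∀ t ∈ Ico a (a + h), ∀ s ∈ Ico a (a + h), g (t, s) = 0) :
    ∫⁻ t in Ico a (a + h), ∫⁻ s in Icc 0 T, ENNReal.ofReal (g (t, s) * |t - s| ^ (-1 - β)) ≤
      ENNReal.ofReal (h * kernelBound C₀ β T h) := by
  have hT : 0 ≤ T := by linarith
  set A := C₀ * (2 * (T ^ (-β + 1) / (-β + 1)))
  have hA : 0 ≤ A :=
    mul_nonneg hC₀ (mul_nonneg zero_le_two (div_nonneg (by positivity) (by linarith)))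
  have hc : 0 ≤ C₀ * h / β := by positivity
  have hcell : Ioo a (a + h) ⊆ Icc 0 T := fun t ht => ⟨by linarith [ht.1], by linarith [ht.2]⟩
  -- the endpoint `t = a` is excluded because `Real.rpow` gives `0 ^ (-β) = 0` there
  rw [← setLIntegral_congr Ioo_ae_eq_Ico]
  calc ∫⁻ t in Ioo a (a + h), ∫⁻ s in Icc 0 T, ENNReal.ofReal (g (t, s) * |t - s| ^ (-1 - β))
      ≤ ∫⁻ t in Ioo a (a + h), (ENNReal.ofReal A + ENNReal.ofReal (C₀ * h / β) *
          ENNReal.ofReal (|t - a| ^ (-β) + |a + h - t| ^ (-β))) := by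
        refine setLIntegral_mono (by fun_prop) fun t ht => ?_
        rw [← ENNReal.ofReal_mul hc, ← ENNReal.ofReal_add hA (by positivity)]
        exact lintegral_Icc_kernel_le_of_mem_Ioo hC₀ hh hβ0 hβ1 (hg_le t (hcell ht))
          (hg_cell t (Ioo_subset_Ico_self ht)) ht (hcell ht)
    _ = ENNReal.ofReal A * ENNReal.ofReal h + ENNReal.ofReal (C₀ * h / β) *
          ∫⁻ t in Ioo a (a + h), ENNReal.ofReal (|t - a| ^ (-β) + |a + h - t| ^ (-β)) := by
        rw [lintegral_add_left measurable_const, setLIntegral_const,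
          lintegral_const_mul _ (by fun_prop), Real.volume_Ioo, add_sub_cancel_left]
    _ ≤ ENNReal.ofReal A * ENNReal.ofReal h + ENNReal.ofReal (C₀ * h / β) *
          ENNReal.ofReal (2 * (h ^ (-β + 1) / (-β + 1))) := by
        gcongr
        simpa using lintegral_Ioo_abs_sub_rpow_add_le (by linarith : -1 < -β)
          (le_add_of_nonneg_right hh)
    _ = ENNReal.ofReal (h * kernelBound C₀ β T h) := by
        have htail_nonneg : 0 ≤ 2 * (h ^ (-β + 1) / (-β + 1)) :=
          mul_nonneg zero_le_two (div_nonneg (by positivity) (by linarith))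
        rw [← ENNReal.ofReal_mul hA, ← ENNReal.ofReal_mul hc,
          ← ENNReal.ofReal_add (by positivity) (by positivity)]
        have : 1 - β ≠ 0 := by linarith
        simp only [A, kernelBound, neg_add_eq_sub]
        field_simp

theorem setLIntegral_Icc_prod_Icc_kernel_le {g : ℝ × ℝ → ℝ} {C₀ β T : ℝ} {N : ℕ}
    (hC₀ : 0 ≤ C₀) (hβ0 : 0 < β) (hβ1 : β < 1) (hT : 0 ≤ T) (hN : N ≠ 0) (hg : Measurable g)
    (hg_le : ∀ t ∈ Icc 0 T, ∀ s ∈ Icc 0 T, g (t, s) ≤ C₀ * (|t - s| + T / N))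
    (hg_cell : ∀ n : ℕ, ∀ t ∈ Ico (n * (T / N)) (n * (T / N) + T / N),
      ∀ s ∈ Ico (n * (T / N)) (n * (T / N) + T / N), g (t, s) = 0) :
    ∫⁻ p in Icc 0 T ×ˢ Icc 0 T, ENNReal.ofReal (g p * |p.1 - p.2| ^ (-1 - β)) ≤
      ENNReal.ofReal (T * kernelBound C₀ β T (T / N)) := by
  set h := T / N
  have hNh : (N : ℝ) * h = T := mul_div_cancel₀ T (by positivity)
  have hcell (n : ℕ) (hn : n ∈ Finset.range N) :
      ∫⁻ t in Ico (n * h) (n * h + h), ∫⁻ s in Icc 0 T,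
          ENNReal.ofReal (g (t, s) * |t - s| ^ (-1 - β)) ≤
        ENNReal.ofReal (h * kernelBound C₀ β T h) := by
    have hnN : (n : ℝ) + 1 ≤ N := by exact_mod_cast Finset.mem_range.1 hn
    exact lintegral_Ico_lintegral_Icc_kernel_le hC₀ (by positivity) hβ0 hβ1 (by positivity)
      (by nlinarith [hNh]) hg_le (hg_cell n)
  calc ∫⁻ p in Icc 0 T ×ˢ Icc 0 T, ENNReal.ofReal (g p * |p.1 - p.2| ^ (-1 - β))
      = ∫⁻ t in Icc 0 (N * h), ∫⁻ s in Icc 0 T,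
          ENNReal.ofReal (g (t, s) * |t - s| ^ (-1 - β)) := by
        rw [Measure.volume_eq_prod, setLIntegral_prod _ (by fun_prop), hNh]
    _ ≤ ∑ n ∈ Finset.range N, ∫⁻ t in Ico (n * h) (n * h + h), ∫⁻ s in Icc 0 T,
          ENNReal.ofReal (g (t, s) * |t - s| ^ (-1 - β)) := lintegral_Icc_le_sum_Ico _ h N
    _ ≤ ∑ n ∈ Finset.range N, ENNReal.ofReal (h * kernelBound C₀ β T h) :=
        Finset.sum_le_sum hcell
    _ = ENNReal.ofReal (T * kernelBound C₀ β T h) := by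
        rw [Finset.sum_const, Finset.card_range, nsmul_eq_mul, ← ENNReal.ofReal_natCast,
          ← ENNReal.ofReal_mul (by positivity), ← mul_assoc, hNh]

/-- Key kernel estimate behind Proposition 4.2: let `T > 0`, `α ∈ (0, 1/2)` and
`C₀ ≥ 0`. There is `C₁ = C₁(T, α, C₀) > 0` such that for every `N ≥ 1`, setting
`h = T/N`, and every measurable `g : [0,T]² → [0,∞)` with
(i) `g(t,s) ≤ C₀(|t − s| + h)` on `[0,T]²`, and
(ii) `g(t,s) = 0` whenever `t` and `s` lie in a common grid interval
`[nh, (n+1)h)`, one has `∫_0^T ∫_0^T g(t,s)|t − s|^{−1−2α} dt ds ≤ C₁`. -/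
theorem kernel_estimate
    (T : ℝ) (hT : 0 < T) (α : ℝ) (hα : α ∈ Set.Ioo (0 : ℝ) (1 / 2))
    (C₀ : ℝ) (hC₀ : 0 ≤ C₀) :
    ∃ C₁ : ℝ, 0 < C₁ ∧
      ∀ N : ℕ, 1 ≤ N →
      ∀ g : ℝ × ℝ → ℝ, Measurable g → (∀ p : ℝ × ℝ, 0 ≤ g p) →
        (∀ t s : ℝ, t ∈ Set.Icc 0 T → s ∈ Set.Icc 0 T →
          g (t, s) ≤ C₀ * (|t - s| + T / N)) →
        (∀ t s : ℝ, (∃ n : ℕ,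
            t ∈ Set.Ico ((n : ℝ) * (T / N)) ((n + 1) * (T / N)) ∧
            s ∈ Set.Ico ((n : ℝ) * (T / N)) ((n + 1) * (T / N))) →
          g (t, s) = 0) →
        (∫⁻ p in Set.Icc (0 : ℝ) T ×ˢ Set.Icc (0 : ℝ) T,
            ENNReal.ofReal (g p * |p.1 - p.2| ^ (-1 - 2 * α))) ≤
          ENNReal.ofReal C₁ := by
  obtain ⟨hβ0, hβ1⟩ : 0 < 2 * α ∧ 2 * α < 1 := ⟨by linarith [hα.1], by linarith [hα.2]⟩
  have hB := kernelBound_nonneg hC₀ hβ0 hβ1 hT.le hT.le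
  refine ⟨T * kernelBound C₀ (2 * α) T T + 1, by positivity,
    fun N hN g hg _ hg_le hg_cell => ?_⟩
  have hh : T / N ≤ T := div_le_self hT.le (by exact_mod_cast hN)
  refine (setLIntegral_Icc_prod_Icc_kernel_le (N := N) hC₀ hβ0 hβ1 hT.le (by omega) hg
    (fun t ht s hs => hg_le t s ht hs) fun n t ht s hs =>
      hg_cell t s ⟨n, by rwa [add_one_mul], by rwa [add_one_mul]⟩).trans
        (ENNReal.ofReal_le_ofReal ?_)
  have := kernelBound_mono (T := T) hC₀ hβ0 hβ1 (by positivity) hh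
  nlinarith
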